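/- Let 𝒱 be a non-empty set of subspaces of ℝ^d, for each V ∈ 𝒱 let 𝒰(V) be a non-empty set of subspaces of ℝ^d, and let γ ∈ ℝ. Then: (1) if there exists V ∈ 𝒱 such that D1(γ,U) holds uniformly for all U ∈ 𝒰(V), then γ ≥ inf_{V∈𝒱} sup_{U∈𝒰(V)} β̄(U); (2) if γ > inf_{V∈𝒱} sup_{U∈𝒰(V)} β̄(U), then there exists V ∈ 𝒱 such that D1(γ,U) holds uniformly for all U ∈ 𝒰(V). -/

import Mathlib

open Set Filter Topology

noncomputable section

abbrev Euc (d : ℕ) := EuclideanSpace ℝ (Fin d)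

/-- The solution `x(n, x₀)` of `x(n+1) = A(n) x(n)`, `x(0,x₀) = x₀`. -/
def sol {d : ℕ} (A : ℕ → (Euc d ≃L[ℝ] Euc d)) : ℕ → Euc d → Euc d
  | 0, x => x
  | n + 1, x => A n (sol A n x)

/-- Boundedness of the coefficients `A(n)` and their inverses. -/
def BddSys {d : ℕ} (A : ℕ → (Euc d ≃L[ℝ] Euc d)) : Prop :=
  (∃ c : ℝ, ∀ n : ℕ, ‖(A n : Euc d →L[ℝ] Euc d)‖ ≤ c) ∧
  (∃ c : ℝ, ∀ n : ℕ, ‖((A n).symm : Euc d →L[ℝ] Euc d)‖ ≤ c)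

/-- `D1(γ,U)` holds uniformly (constant `C`). -/
def D1u {d : ℕ} (A : ℕ → (Euc d ≃L[ℝ] Euc d)) (γ : ℝ) (U : Submodule ℝ (Euc d)) : Prop :=
  ∃ C : ℝ, 0 < C ∧
    ∀ m n : ℕ, m ≤ n → ∀ x₀ ∈ U,
      ‖sol A n x₀‖ ≤ C * Real.exp (γ * ((n : ℝ) - (m : ℝ))) * ‖sol A m x₀‖

/-- Upper Bohl exponent `β̄(U)` (with the convention `sSup ∅ = -∞` in `EReal`). -/
def upperBohl {d : ℕ} (A : ℕ → (Euc d ≃L[ℝ] Euc d)) (U : Submodule ℝ (Euc d)) : EReal :=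
  ⨅ N : ℕ, sSup {r : EReal | ∃ m n : ℕ, ∃ x₀ ∈ U, x₀ ≠ 0 ∧ N < n - m ∧
    r = ((((n : ℝ) - (m : ℝ))⁻¹ * Real.log (‖sol A n x₀‖ / ‖sol A m x₀‖) : ℝ) : EReal)}

/-!
Both implications reduce to a single subspace `U`: `D1(γ,U)` forces `β̄(U) ≤ γ`, and
`β̄(U) < γ` forces `D1(γ,U)`; the infimum over `𝒱` and the suprema over `𝒰(V)` then pass through
by order theory. A bound `‖x(n)‖ ≤ C e^{γ(n-m)} ‖x(m)‖` gives `‖x(n)‖ ≤ e^{γ'(n-m)} ‖x(m)‖` for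
any `γ' > γ` as soon as `(γ' - γ)(n - m) ≥ log C`, so every tail supremum beyond that gap is at
most `γ'`. Conversely, `β̄(U) < γ` gives the bound with `C = 1` for gaps `n - m > N`, and on the
finitely many shorter gaps the growth `‖x(n)‖ ≤ a^{n-m} ‖x(m)‖`, `a ≥ sup ‖A(n)‖`, is absorbed
into the constant.
-/

lemma Real.inv_mul_log_div_le_iff {p q T β : ℝ} (hp : 0 < p) (hq : 0 < q) (hT : 0 < T) :
    T⁻¹ * Real.log (p / q) ≤ β ↔ p ≤ Real.exp (β * T) * q := by
  rw [inv_mul_le_iff₀ hT, Real.log_le_iff_le_exp (div_pos hp hq), div_le_iff₀ hq, mul_comm T]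

lemma pow_le_mul_exp_mul {a γ : ℝ} (ha : 1 ≤ a) {k N : ℕ} (hk : k ≤ N) :
    a ^ k ≤ a ^ N * Real.exp (|γ| * N) * Real.exp (γ * k) := by
  have hγ : 0 ≤ |γ| * N + γ * k := by
    have : |γ| * k ≤ |γ| * N := by gcongr
    nlinarith [neg_abs_le γ, (Nat.cast_nonneg k : (0 : ℝ) ≤ k)]
  calc a ^ k ≤ a ^ N * 1 := by rw [mul_one]; exact pow_le_pow_right₀ ha hk
    _ ≤ a ^ N * Real.exp (|γ| * N + γ * k) := by gcongr; exact Real.one_le_exp hγ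
    _ = a ^ N * Real.exp (|γ| * N) * Real.exp (γ * k) := by rw [Real.exp_add, mul_assoc]

section Solution

variable {d : ℕ} {A : ℕ → (Euc d ≃L[ℝ] Euc d)}

lemma sol_eq_zero_iff {n : ℕ} {x : Euc d} : sol A n x = 0 ↔ x = 0 := by
  induction n with
  | zero => rfl
  | succ n ih => simp [sol, ih]

lemma norm_sol_pos (n : ℕ) {x : Euc d} (hx : x ≠ 0) : 0 < ‖sol A n x‖ :=
  norm_pos_iff.mpr (sol_eq_zero_iff.not.mpr hx)

lemma norm_sol_le_pow_mul {a : ℝ} (ha : ∀ n, ‖(A n : Euc d →L[ℝ] Euc d)‖ ≤ a) (x : Euc d)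
    {m n : ℕ} (hmn : m ≤ n) : ‖sol A n x‖ ≤ a ^ (n - m) * ‖sol A m x‖ := by
  induction n, hmn using Nat.le_induction with
  | base => simp
  | succ n hmn ih =>
    have ha0 : 0 ≤ a := (norm_nonneg _).trans (ha 0)
    calc ‖sol A (n + 1) x‖ ≤ a * ‖sol A n x‖ :=
          (A n : Euc d →L[ℝ] Euc d).le_of_opNorm_le (ha n) _
      _ ≤ a * (a ^ (n - m) * ‖sol A m x‖) := by gcongr
      _ = a ^ (n + 1 - m) * ‖sol A m x‖ := by rw [Nat.sub_add_comm hmn, pow_succ]; ring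

variable {U : Submodule ℝ (Euc d)}

lemma upperBohl_le_of_forall_sub_gt {β : ℝ} {N : ℕ}
    (h : ∀ m n, N < n - m → ∀ x ∈ U,
      ‖sol A n x‖ ≤ Real.exp (β * ((n : ℝ) - m)) * ‖sol A m x‖) :
    upperBohl A U ≤ β := by
  refine (iInf_le _ N).trans (sSup_le ?_)
  rintro r ⟨m, n, x, hxU, hx, hN, rfl⟩
  have hT : (0 : ℝ) < (n : ℝ) - m := sub_pos.mpr (by exact_mod_cast (by omega : m < n))
  exact EReal.coe_le_coe_iff.mpr <| (Real.inv_mul_log_div_le_iff (norm_sol_pos n hx)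
    (norm_sol_pos m hx) hT).mpr (h m n hN x hxU)

lemma exists_forall_sub_gt_of_upperBohl_lt {γ : ℝ} (h : upperBohl A U < γ) :
    ∃ N : ℕ, ∀ m n, N < n - m → ∀ x ∈ U,
      ‖sol A n x‖ ≤ Real.exp (γ * ((n : ℝ) - m)) * ‖sol A m x‖ := by
  obtain ⟨N, hN⟩ := iInf_lt_iff.mp h
  refine ⟨N, fun m n hmn x hxU => ?_⟩
  rcases eq_or_ne x 0 with rfl | hx
  · simp [sol_eq_zero_iff.mpr]
  have hT : (0 : ℝ) < (n : ℝ) - m := sub_pos.mpr (by exact_mod_cast (by omega : m < n))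
  have hlt : ((((n : ℝ) - m)⁻¹ * Real.log (‖sol A n x‖ / ‖sol A m x‖) : ℝ) : EReal) < γ := by
    refine (le_sSup ?_).trans_lt hN
    exact ⟨m, n, x, hxU, hx, hmn, rfl⟩
  exact (Real.inv_mul_log_div_le_iff (norm_sol_pos n hx) (norm_sol_pos m hx) hT).mp
    (EReal.coe_lt_coe_iff.mp hlt).le

lemma D1u.exists_forall_sub_gt {γ γ' : ℝ} (h : D1u A γ U) (hγ : γ < γ') :
    ∃ N : ℕ, ∀ m n, N < n - m → ∀ x ∈ U,
      ‖sol A n x‖ ≤ Real.exp (γ' * ((n : ℝ) - m)) * ‖sol A m x‖ := by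
  obtain ⟨C, hC, hD⟩ := h
  obtain ⟨N, hN⟩ := exists_nat_gt (Real.log C / (γ' - γ))
  refine ⟨N, fun m n hmn x hxU => ?_⟩
  have hgap : (N : ℝ) ≤ (n : ℝ) - m := by
    rw [← Nat.cast_sub (by omega)]; exact_mod_cast hmn.le
  have hCexp : C * Real.exp (γ * ((n : ℝ) - m)) ≤ Real.exp (γ' * ((n : ℝ) - m)) := by
    rw [← Real.log_le_iff_le_exp (mul_pos hC (Real.exp_pos _)), Real.log_mul hC.ne' (Real.exp_ne_zero _),
      Real.log_exp]
    rw [div_lt_iff₀ (sub_pos.mpr hγ)] at hN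
    nlinarith
  calc ‖sol A n x‖ ≤ C * Real.exp (γ * ((n : ℝ) - m)) * ‖sol A m x‖ := hD m n (by omega) x hxU
    _ ≤ Real.exp (γ' * ((n : ℝ) - m)) * ‖sol A m x‖ := by gcongr

lemma upperBohl_le_of_D1u {γ : ℝ} (h : D1u A γ U) : upperBohl A U ≤ γ :=
  EReal.le_of_forall_lt_iff_le.mp fun _ hγ' =>
    have ⟨_, hN⟩ := h.exists_forall_sub_gt (EReal.coe_lt_coe_iff.mp hγ')
    upperBohl_le_of_forall_sub_gt hN

lemma D1u_of_forall_sub_gt {a γ : ℝ} (ha : ∀ n, ‖(A n : Euc d →L[ℝ] Euc d)‖ ≤ a) {N : ℕ}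
    (h : ∀ m n, N < n - m → ∀ x ∈ U,
      ‖sol A n x‖ ≤ Real.exp (γ * ((n : ℝ) - m)) * ‖sol A m x‖) :
    D1u A γ U := by
  set a' := max a 1
  refine ⟨a' ^ N * Real.exp (|γ| * N), by positivity, fun m n hmn x hxU => ?_⟩
  have hC : 1 ≤ a' ^ N * Real.exp (|γ| * N) :=
    one_le_mul_of_one_le_of_one_le (one_le_pow₀ (le_max_right _ _))
      (Real.one_le_exp (by positivity))
  rcases lt_or_ge N (n - m) with hN | hN
  · calc ‖sol A n x‖ ≤ Real.exp (γ * ((n : ℝ) - m)) * ‖sol A m x‖ := h m n hN x hxU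
      _ ≤ _ := by
        rw [mul_assoc _ (Real.exp _)]; exact le_mul_of_one_le_left (by positivity) hC
  · rw [← Nat.cast_sub hmn]
    calc ‖sol A n x‖ ≤ a' ^ (n - m) * ‖sol A m x‖ :=
          norm_sol_le_pow_mul (fun k => (ha k).trans (le_max_left _ _)) x hmn
      _ ≤ _ := by gcongr; exact pow_le_mul_exp_mul (le_max_right _ _) hN

lemma D1u_of_upperBohl_lt (hA : BddSys A) {γ : ℝ} (h : upperBohl A U < γ) : D1u A γ U :=
  have ⟨_, ha⟩ := hA.1
  have ⟨_, hN⟩ := exists_forall_sub_gt_of_upperBohl_lt h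
  D1u_of_forall_sub_gt ha hN

end Solution

theorem upperBohl_and_D1 {d : ℕ}
    (A : ℕ → (Euc d ≃L[ℝ] Euc d)) (hA : BddSys A)
    (𝒱 : Set (Submodule ℝ (Euc d)))
    (𝒰 : Submodule ℝ (Euc d) → Set (Submodule ℝ (Euc d)))
    (γ : ℝ) :
    ((∃ V ∈ 𝒱, ∀ U ∈ 𝒰 V, D1u A γ U) →
      (⨅ V ∈ 𝒱, ⨆ U ∈ 𝒰 V, upperBohl A U) ≤ (γ : EReal)) ∧
    ((⨅ V ∈ 𝒱, ⨆ U ∈ 𝒰 V, upperBohl A U) < (γ : EReal) →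
      ∃ V ∈ 𝒱, ∀ U ∈ 𝒰 V, D1u A γ U) := by
  constructor
  · rintro ⟨V, hV, hD⟩
    exact (iInf₂_le V hV).trans (iSup₂_le fun U hU => upperBohl_le_of_D1u (hD U hU))
  · intro hlt
    obtain ⟨V, hV, hVlt⟩ := lt_biInf_iff.mp hlt
    exact ⟨V, hV, fun U hU =>
      D1u_of_upperBohl_lt hA ((le_iSup₂ (f := fun U _ => upperBohl A U) U hU).trans_lt hVlt)⟩

end
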